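/- arXiv:cs/0603050 — 3 statements merged into one kernel-verified Lean document; each statement's English description precedes it below -/
import Mathlib

section
/- Let Ω ≥ 1, k ≥ 1, l_i ≤ 2^Ω − 1 for 1 ≤ i ≤ k. Define Next_Ω(l) = l + 1 if l < 2^Ω − 1 and Next_Ω(l) = 2^Ω − 1 otherwise. Let L = Σ_i l_i · 2^{(Ω+1)(i−1)}, E₁ = Σ_i 2^{(Ω+1)(i−1)}, E₂ = Σ_i 2^Ω · 2^{(Ω+1)(i−1)}, T = L + E₁, and L′ = T − ((T &&& E₂) >>> Ω). Then L′ = Σ_{i=1}^{k} Next_Ω(l_i) · 2^{(Ω+1)(i−1)}. -/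
/-!
Adding `E₁` increments every block. Since `l i ≤ 2^Ω - 1`, each block of `T` holds
`l i + 1 ≤ 2^Ω < 2^(Ω+1)`, so no carry crosses a block boundary and bit `Ω` of a block is
set exactly when it overflowed. Masking with `E₂` and shifting right by `Ω` therefore
leaves `1` in the overflowed blocks and `0` elsewhere, and subtracting it blockwise turns
`2^Ω` back into `2^Ω - 1`.
-/

theorem Nat.two_pow_mul_add_land_two_pow_mul_add {w x u : ℕ} (y v : ℕ) (hx : x < 2 ^ w)
    (hu : u < 2 ^ w) :
    (2 ^ w * y + x) &&& (2 ^ w * v + u) = 2 ^ w * (y &&& v) + (x &&& u) := by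
  have hxu : x &&& u < 2 ^ w := lt_of_le_of_lt Nat.and_le_left hx
  apply Nat.eq_of_testBit_eq
  intro j
  rw [Nat.testBit_land, Nat.testBit_two_pow_mul_add _ hx, Nat.testBit_two_pow_mul_add _ hu,
    Nat.testBit_two_pow_mul_add _ hxu]
  split_ifs <;> simp only [Nat.testBit_land]

theorem Nat.land_two_pow_of_le {n s : ℕ} (hn : n ≤ 2 ^ s) :
    n &&& 2 ^ s = 2 ^ s * if n = 2 ^ s then 1 else 0 := by
  rw [Nat.and_two_pow]
  rcases hn.eq_or_lt with rfl | hlt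
  · simp [Nat.testBit_two_pow_self]
  · simp [Nat.testBit_eq_false_of_lt hlt, hlt.ne]

def packBlocks (w k : ℕ) (a : ℕ → ℕ) : ℕ :=
  ∑ i ∈ Finset.range k, a i * 2 ^ (w * i)

namespace packBlocks

variable {w k : ℕ}

theorem succ (a : ℕ → ℕ) :
    packBlocks w (k + 1) a = 2 ^ w * packBlocks w k (fun i => a (i + 1)) + a 0 := by
  simp only [packBlocks, Finset.sum_range_succ' _ k, Finset.mul_sum, mul_zero, pow_zero,
    mul_one]
  congr 1
  refine Finset.sum_congr rfl fun i _ => ?_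
  rw [mul_add, pow_add, mul_one]
  ring

theorem congr {a b : ℕ → ℕ} (hab : ∀ i < k, a i = b i) :
    packBlocks w k a = packBlocks w k b :=
  Finset.sum_congr rfl fun i hi => by rw [hab i (Finset.mem_range.mp hi)]

theorem sub {a b : ℕ → ℕ} (hba : ∀ i < k, b i ≤ a i) :
    packBlocks w k a - packBlocks w k b = packBlocks w k (fun i => a i - b i) := by
  simp only [packBlocks, tsub_mul]
  exact (Finset.sum_tsub_distrib _ fun i hi =>
    Nat.mul_le_mul_right _ (hba i (Finset.mem_range.mp hi))).symm

theorem two_pow_mul_shiftRight (s : ℕ) (c : ℕ → ℕ) :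
    packBlocks w k (fun i => 2 ^ s * c i) >>> s = packBlocks w k c := by
  have hfactor : packBlocks w k (fun i => 2 ^ s * c i) = 2 ^ s * packBlocks w k c := by
    simp only [packBlocks, Finset.mul_sum, mul_assoc]
  rw [hfactor, Nat.shiftRight_eq_div_pow, Nat.mul_div_cancel_left _ (Nat.two_pow_pos s)]

theorem land {a b : ℕ → ℕ} (ha : ∀ i < k, a i < 2 ^ w) (hb : ∀ i < k, b i < 2 ^ w) :
    packBlocks w k a &&& packBlocks w k b = packBlocks w k (fun i => a i &&& b i) := by
  induction k generalizing a b with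
  | zero => simp [packBlocks]
  | succ k ih =>
    rw [succ, succ, succ,
      Nat.two_pow_mul_add_land_two_pow_mul_add _ _ (ha 0 k.succ_pos) (hb 0 k.succ_pos),
      ih (fun i hi => ha (i + 1) (by omega)) (fun i hi => hb (i + 1) (by omega))]

end packBlocks

theorem overflow_correction_general (Ω k : ℕ)
    (l : ℕ → ℕ) (hl : ∀ i < k, l i ≤ 2 ^ Ω - 1)
    (L E₁ E₂ T L' : ℕ)
    (hL : L = ∑ i ∈ Finset.range k, l i * 2 ^ ((Ω + 1) * i))
    (hE₁ : E₁ = ∑ i ∈ Finset.range k, 2 ^ ((Ω + 1) * i))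
    (hE₂ : E₂ = ∑ i ∈ Finset.range k, 2 ^ Ω * 2 ^ ((Ω + 1) * i))
    (hT : T = L + E₁)
    (hL' : L' = T - ((T &&& E₂) >>> Ω)) :
    L' = ∑ i ∈ Finset.range k,
        (if l i < 2 ^ Ω - 1 then l i + 1 else 2 ^ Ω - 1) * 2 ^ ((Ω + 1) * i) := by
  have hblock : ∀ i < k, l i + 1 ≤ 2 ^ Ω := fun i hi => by
    have := hl i hi; have := Nat.two_pow_pos Ω; omega
  set overflow : ℕ → ℕ := fun i => if l i + 1 = 2 ^ Ω then 1 else 0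
  have hT' : T = packBlocks (Ω + 1) k (fun i => l i + 1) := by
    rw [hT, hL, hE₁]
    simp only [packBlocks, add_mul, one_mul, Finset.sum_add_distrib]
  have hmask : T &&& E₂ = packBlocks (Ω + 1) k (fun i => 2 ^ Ω * overflow i) := by
    have hpow : 2 ^ Ω < 2 ^ (Ω + 1) := Nat.pow_lt_pow_right (by norm_num) (by omega)
    have hE₂' : E₂ = packBlocks (Ω + 1) k (fun _ => 2 ^ Ω) := hE₂
    rw [hT', hE₂', packBlocks.land (fun i hi => (hblock i hi).trans_lt hpow) (fun _ _ => hpow)]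
    exact packBlocks.congr fun i hi => Nat.land_two_pow_of_le (hblock i hi)
  rw [hL', hmask, packBlocks.two_pow_mul_shiftRight, hT', packBlocks.sub fun i hi => by
    have := hblock i hi; simp only [overflow]; split_ifs <;> omega]
  refine packBlocks.congr fun i hi => ?_
  have := hblock i hi
  simp only [overflow]
  split_ifs <;> omega

/-- Overflow correction: with `T = L + E₁` and `E₂` the mask of overflow bits,
`L' = T − ((T &&& E₂) >>> Ω)` packs the tuple `(Next_Ω(l₁),…,Next_Ω(l_k))`,
where `Next_Ω(l) = l + 1` if `l < 2^Ω − 1` and `Next_Ω(l) = 2^Ω − 1` otherwise. -/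
theorem overflow_correction (Ω k : ℕ) (hΩ : 1 ≤ Ω) (hk : 1 ≤ k)
    (l : ℕ → ℕ) (hl : ∀ i < k, l i ≤ 2 ^ Ω - 1)
    (L E₁ E₂ T L' : ℕ)
    (hL : L = ∑ i ∈ Finset.range k, l i * 2 ^ ((Ω + 1) * i))
    (hE₁ : E₁ = ∑ i ∈ Finset.range k, 2 ^ ((Ω + 1) * i))
    (hE₂ : E₂ = ∑ i ∈ Finset.range k, 2 ^ Ω * 2 ^ ((Ω + 1) * i))
    (hT : T = L + E₁)
    (hL' : L' = T - ((T &&& E₂) >>> Ω)) :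
    L' = ∑ i ∈ Finset.range k,
        (if l i < 2 ^ Ω - 1 then l i + 1 else 2 ^ Ω - 1) * 2 ^ ((Ω + 1) * i) :=
  overflow_correction_general Ω k l hl L E₁ E₂ T L' hL hE₁ hE₂ hT hL'
end

section
/- Let Ω ≥ 1, k ≥ 2, l_i ≤ 2^Ω − 1 for 1 ≤ i ≤ k, and L = Σ_{i=1}^{k} l_i · 2^{(Ω+1)(i−1)}. Let S ⊆ {2,…,k} and M = Σ_{i∈S} (2^Ω − 1) · 2^{(Ω+1)(i−1)}. Then (L <<< (Ω+1)) &&& M = Σ_{i∈S} l_{i−1} · 2^{(Ω+1)(i−1)}, where <<< is the left shift (x <<< m = x · 2^m). -/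
lemma blocksum_testBit (B : ℕ) (hB : 0 < B) :
    ∀ (n : ℕ) (f : ℕ → ℕ), (∀ i, i < n → f i < 2 ^ B) → ∀ j,
      Nat.testBit (∑ i ∈ Finset.range n, f i * 2 ^ (B * i)) j =
        if j / B < n then Nat.testBit (f (j / B)) (j % B) else false := by
  intro n
  induction n with
  | zero => simp
  | succ n ih =>
    intro f hf j
    have hsum : ∑ i ∈ Finset.range (n + 1), f i * 2 ^ (B * i)
        = 2 ^ B * (∑ i ∈ Finset.range n, f (i + 1) * 2 ^ (B * i)) + f 0 := by
      rw [Finset.sum_range_succ', Finset.mul_sum]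
      simp [pow_mul, pow_succ, pow_add, mul_comm, mul_assoc, mul_left_comm]
    rw [hsum, Nat.testBit_two_pow_mul_add _ (hf 0 (Nat.succ_pos n)) j]
    rcases lt_or_ge j B with h | h
    · rw [if_pos h, Nat.div_eq_of_lt h, Nat.mod_eq_of_lt h, if_pos (Nat.succ_pos n)]
    · rw [if_neg (not_lt.mpr h), ih (fun i => f (i + 1)) (fun i hi => hf (i + 1) (by omega)) (j - B)]
      have hd : j / B = (j - B) / B + 1 := by rw [Nat.div_eq_sub_div hB h]
      have hm : j % B = (j - B) % B := Nat.mod_eq_sub_mod h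
      rw [hd, hm]
      by_cases hc : (j - B) / B < n
      · rw [if_pos hc, if_pos (by omega)]
      · rw [if_neg hc, if_neg (by omega)]

/-- First-type computation: left-shifting the packed state `L` by one big block
of `Ω + 1` bits and masking with `M` places component `l_{i−1}` into each
selected block `i` (blocks indexed from 0, so `S ⊆ {1,…,k−1}`). -/
theorem shift_mask_blocks (Ω k : ℕ) (hΩ : 1 ≤ Ω) (hk : 2 ≤ k)
    (l : ℕ → ℕ) (hl : ∀ i < k, l i ≤ 2 ^ Ω - 1)
    (L : ℕ) (hL : L = ∑ i ∈ Finset.range k, l i * 2 ^ ((Ω + 1) * i))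
    (S : Finset ℕ) (hS : S ⊆ Finset.Ico 1 k) (M : ℕ)
    (hM : M = ∑ i ∈ S, (2 ^ Ω - 1) * 2 ^ ((Ω + 1) * i)) :
    (L <<< (Ω + 1)) &&& M = ∑ i ∈ S, l (i - 1) * 2 ^ ((Ω + 1) * i) := by
  set B := Ω + 1 with hB
  have hB0 : 0 < B := by omega
  have hpos : 1 ≤ 2 ^ Ω := Nat.one_le_two_pow
  have hBe : (2 : ℕ) ^ B = 2 * 2 ^ Ω := by rw [hB]; ring
  have hΩB : 2 ^ Ω - 1 < 2 ^ B := by omega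
  have hsub : S ⊆ Finset.range k := by
    intro x hx; have := hS hx; simp at this ⊢; omega
  set f : ℕ → ℕ := fun i => if i = 0 then 0 else l (i - 1) with hf
  have hLs : L <<< B = ∑ i ∈ Finset.range (k + 1), f i * 2 ^ (B * i) := by
    rw [Nat.shiftLeft_eq, hL, Finset.sum_mul, Finset.sum_range_succ']
    simp only [hf, Nat.succ_ne_zero, if_false, if_pos rfl, Nat.add_sub_cancel,
      mul_zero, pow_zero, zero_mul, mul_one, add_zero]
    exact Finset.sum_congr rfl fun x _ => by ring
  set g : ℕ → ℕ := fun i => if i ∈ S then 2 ^ Ω - 1 else 0 with hg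
  have hMs : M = ∑ i ∈ Finset.range k, g i * 2 ^ (B * i) := by
    rw [hM, show (∑ i ∈ S, (2 ^ Ω - 1) * 2 ^ (B * i)) = ∑ i ∈ S, g i * 2 ^ (B * i) from
      Finset.sum_congr rfl fun i hi => by simp [hg, hi]]
    exact Finset.sum_subset hsub fun x _ hx => by simp [hg, hx]
  set h : ℕ → ℕ := fun i => if i ∈ S then l (i - 1) else 0 with hh
  have hRs : ∑ i ∈ S, l (i - 1) * 2 ^ (B * i) = ∑ i ∈ Finset.range k, h i * 2 ^ (B * i) := by
    rw [show (∑ i ∈ S, l (i - 1) * 2 ^ (B * i)) = ∑ i ∈ S, h i * 2 ^ (B * i) from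
      Finset.sum_congr rfl fun i hi => by simp [hh, hi]]
    exact Finset.sum_subset hsub fun x _ hx => by simp [hh, hx]
  have hfb : ∀ i, i < k + 1 → f i < 2 ^ B := by
    intro i hi
    simp only [hf]
    split
    · positivity
    · have := hl (i - 1) (by omega); omega
  have hgb : ∀ i, i < k → g i < 2 ^ B := by
    intro i _; simp only [hg]; split
    · exact hΩB
    · positivity
  have hhb : ∀ i, i < k → h i < 2 ^ B := by
    intro i hi; simp only [hh]; split
    · have := hl (i - 1) (by omega); omega
    · positivity
  rw [hLs, hMs, hRs]
  apply Nat.eq_of_testBit_eq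
  intro j
  rw [Nat.testBit_and, blocksum_testBit B hB0 (k + 1) f hfb j,
    blocksum_testBit B hB0 k g hgb j, blocksum_testBit B hB0 k h hhb j]
  set q := j / B with hq
  set r := j % B with hr
  have hrB : r < B := Nat.mod_lt _ hB0
  by_cases hqk : q < k
  · have hq1 : q < k + 1 := by omega
    rw [if_pos hq1, if_pos hqk, if_pos hqk]
    simp only [hg, hh, hf]
    by_cases hqS : q ∈ S
    · have hq0 : q ≠ 0 := by have := hS hqS; simp at this; omega
      rw [if_pos hqS, if_pos hqS, if_neg hq0]
      rcases lt_or_ge r Ω with hrΩ | hrΩ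
      · simp [Nat.testBit_two_pow_sub_one, hrΩ]
      · have hfalse : Nat.testBit (l (q - 1)) r = false := by
          apply Nat.testBit_lt_two_pow
          have h1 := hl (q - 1) (by omega)
          calc l (q - 1) < 2 ^ Ω := by omega
            _ ≤ 2 ^ r := Nat.pow_le_pow_right (by norm_num) hrΩ
        simp [hfalse]
    · simp [hqS]
  · rw [if_neg hqk, if_neg hqk, Bool.and_false]
end

section
/- For a word t = t_1⋯t_n over alphabet A and a pattern p = p_1⋯p_k, define f_i(m) for 0 ≤ m ≤ n and 1 ≤ i ≤ k as the minimal l ≤ m such that p_1⋯p_i is a subsequence of the length-l suffix of t_1⋯t_m, and f_i(m) = ∞ (no such l exists) otherwise. Then f_i satisfies the recurrence: f_i(0) = ∞ for all i, and for m ≥ 1, f_i(m) = f_{i−1}(m−1) + 1 if t_m = p_i (with f_0 ≡ 0), and f_i(m) = f_i(m−1) + 1 otherwise (with ∞ + 1 = ∞), where in the case t_m = p_i one takes the minimum of the two expressions; moreover p is an episode of t in a w-window with that window ending at position m if and only if f_k(m) ≤ w. -/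
/-!
Since the suffixes of a word are nested, `f i m ≤ w` holds exactly when `p₁⋯pᵢ` is a subsequence
of the length-`w` suffix of `t₁⋯t_m`. Both parts of the theorem are statements about these
threshold predicates: the window criterion is the case `i = k`, and the recurrence comes from
the fact that `s ++ [b]` embeds in `u ++ [a]` either by matching `b` with `a` or inside `u`.
-/

namespace ENat

theorem sInf_natCast_le_iff {Q : ℕ → Prop} {w : ℕ} :
    sInf {x : ℕ∞ | ∃ l : ℕ, x = l ∧ Q l} ≤ w ↔ ∃ l ≤ w, Q l := by
  constructor
  · intro h
    rcases Set.eq_empty_or_nonempty {x : ℕ∞ | ∃ l : ℕ, x = l ∧ Q l} with hempty | hne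
    · simp [hempty] at h
    · obtain ⟨l, hl, hQ⟩ := csInf_mem hne
      rw [hl] at h
      exact ⟨l, by exact_mod_cast h, hQ⟩
  · rintro ⟨l, hlw, hQ⟩
    exact sInf_le_of_le ⟨l, rfl, hQ⟩ (by exact_mod_cast hlw)

theorem eq_add_one_of_forall_le_iff {m n : ℕ∞} (hzero : ¬m ≤ 0)
    (hsucc : ∀ k : ℕ, m ≤ (k + 1 : ℕ) ↔ n ≤ k) : m = n + 1 := by
  refine eq_of_forall_ge_iff fun c => ?_
  induction c using ENat.recTopCoe with
  | top => simp
  | coe c =>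
    cases c with
    | zero => simpa using hzero
    | succ k =>
      rw [hsucc k, Nat.cast_add_one, ENat.add_le_add_iff_right one_ne_top]

end ENat

namespace List

theorem concat_sublist_concat_iff {α : Type*} {s u : List α} {a b : α} :
    s ++ [b] <+ u ++ [a] ↔ b = a ∧ s <+ u ∨ s ++ [b] <+ u := by
  rw [← reverse_sublist]
  simp only [reverse_append, reverse_singleton, singleton_append, sublist_cons_iff, cons.injEq]
  rw [or_comm]
  simp [← reverse_sublist (l₁ := s ++ [b])]

theorem drop_take_succ {α : Type*} {t : List α} {m : ℕ} (hm : m < t.length) (k : ℕ) :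
    (t.take (m + 1)).drop (m + 1 - (k + 1)) = (t.take m).drop (m - k) ++ [t[m]] := by
  rw [Nat.add_sub_add_right, take_succ_eq_append_getElem hm,
    drop_append_of_le_length (by simp; omega)]

end List

section ShortestSuffix

variable {A : Type*} (t p : List A)

noncomputable def shortestSuffixLen (i m : ℕ) : ℕ∞ :=
  sInf {x : ℕ∞ | ∃ l : ℕ, x = l ∧ l ≤ m ∧ (p.take i).Sublist ((t.take m).drop (m - l))}

variable {t p}

theorem shortestSuffixLen_le_iff {i m w : ℕ} :
    shortestSuffixLen t p i m ≤ w ↔ (p.take i).Sublist ((t.take m).drop (m - w)) := by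
  rw [shortestSuffixLen, ENat.sInf_natCast_le_iff]
  constructor
  · rintro ⟨l, hlw, -, hsub⟩
    exact hsub.trans (List.drop_sublist_drop_left _ (by omega))
  · intro hsub
    refine ⟨min w m, min_le_left w m, min_le_right w m, ?_⟩
    rwa [show m - min w m = m - w by omega]

theorem shortestSuffixLen_zero_right {i : ℕ} (hi₀ : 0 < i) (hi : i ≤ p.length) :
    shortestSuffixLen t p i 0 = ⊤ := by
  refine ENat.eq_top_iff_forall_gt.2 fun k => not_le.1 fun hle => ?_
  rw [shortestSuffixLen_le_iff] at hle
  simp only [List.take_zero, List.drop_nil, List.sublist_nil, List.take_eq_nil_iff] at hle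
  rcases hle with rfl | rfl <;> simp_all

theorem shortestSuffixLen_succ_succ [DecidableEq A] {i m : ℕ} (hi : i < p.length)
    (hm : m < t.length) :
    shortestSuffixLen t p (i + 1) (m + 1) =
      if t[m] = p[i] then min (shortestSuffixLen t p i m + 1) (shortestSuffixLen t p (i + 1) m + 1)
      else shortestSuffixLen t p (i + 1) m + 1 := by
  rw [min_add_add_right, ← apply_ite (· + 1)]
  apply ENat.eq_add_one_of_forall_le_iff
  · rw [← Nat.cast_zero, shortestSuffixLen_le_iff]
    simpa using List.ne_nil_of_length_pos (by omega)
  · intro k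
    rw [shortestSuffixLen_le_iff, List.drop_take_succ hm, List.take_succ_eq_append_getElem hi,
      List.concat_sublist_concat_iff, ← List.take_succ_eq_append_getElem hi]
    split_ifs with heq
    · simp [shortestSuffixLen_le_iff, heq]
    · simp [shortestSuffixLen_le_iff, Ne.symm heq]

end ShortestSuffix

/-- Correctness invariant of the episode-matching automaton. Let `f i m` be the
minimal `l ≤ m` such that `p₁⋯pᵢ` is a subsequence of the length-`l` suffix of
`t₁⋯t_m` (and `⊤` if there is none). Then `f` satisfies the stated recurrence,
and `p` is an episode of `t` in a `w`-window ending at position `m` iff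
`f p.length m ≤ w`. -/
theorem episode_automaton_invariant {A : Type*} [DecidableEq A] (t p : List A)
    (f : ℕ → ℕ → ℕ∞)
    (hf : ∀ i m : ℕ, f i m = sInf {x : ℕ∞ | ∃ l : ℕ, x = (l : ℕ∞) ∧ l ≤ m ∧
        List.Sublist (p.take i) ((t.take m).drop (m - l))}) :
    (∀ i : ℕ, 1 ≤ i → i ≤ p.length → f i 0 = ⊤) ∧
    (∀ i m : ℕ, 1 ≤ i → i ≤ p.length → 1 ≤ m → m ≤ t.length →
      f i m = if t[m - 1]? = p[i - 1]? then
          min (f (i - 1) (m - 1) + 1) (f i (m - 1) + 1)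
        else f i (m - 1) + 1) ∧
    (∀ m w : ℕ, m ≤ t.length →
      (List.Sublist p ((t.take m).drop (m - w)) ↔ f p.length m ≤ (w : ℕ∞))) := by
  obtain rfl : f = shortestSuffixLen t p := funext fun i => funext (hf i)
  refine ⟨fun i hi₀ hi => shortestSuffixLen_zero_right hi₀ hi, ?_, ?_⟩
  · rintro i m hi₀ hi hm₀ hm
    obtain ⟨i, rfl⟩ := Nat.exists_eq_add_of_le' hi₀
    obtain ⟨m, rfl⟩ := Nat.exists_eq_add_of_le' hm₀
    simp only [Nat.add_sub_cancel, List.getElem?_eq_getElem hi, List.getElem?_eq_getElem hm,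
      Option.some_inj]
    exact shortestSuffixLen_succ_succ hi hm
  · intro m w _
    rw [shortestSuffixLen_le_iff, List.take_length]
end
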